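/- arXiv:1605.04207 — 3 statements merged into one kernel-verified Lean document; each statement's English description precedes it below -/
import Mathlib

section
/- Over a field of characteristic zero, the multilinear polynomial Q obtained by reducing (x_1 + ... + x_n)^n modulo the ideal generated by {x_i^2 - x_i : i in [n]} has the monomial x_1·x_2···x_n appearing with nonzero coefficient (in fact with coefficient n!), and consequently the span of all partial derivatives of Q has dimension at least 2^n. -/
/-!
For any polynomial in the variables `σ`, the alternating sum `∑ₜ (-1)^|tᶜ| p(𝟙ₜ)` over the vertices
of the cube is the sum of the coefficients of the monomials involving every variable. For a
multilinear `Q` and for the homogeneous `(∑ xᵢ)ⁿ` with `n = |σ|` the only such monomial is `x₁⋯xₙ`,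
so the two polynomials, agreeing on the cube, share its coefficient; for `(∑ xᵢ)ⁿ` it is `n!`, read
off from `∂₁⋯∂ₙ (∑ xᵢ)ⁿ = n!`.

For `s ⊆ σ`, the derivative `∂_{sᶜ} Q` has coefficient `n!` at `x^s` and coefficient `0` at every
`x^{s'}` with `s' ⊄ s`, which could only come from a monomial of `Q` containing a square. This
triangularity makes the `2ⁿ` derivatives linearly independent.
-/

open MvPolynomial Finset

noncomputable def Finset.indicatorExponent {σ : Type*} (s : Finset σ) : σ →₀ ℕ :=
  ∑ i ∈ s, Finsupp.single i 1

namespace Finset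

variable {σ : Type*} [DecidableEq σ]

theorem indicatorExponent_apply (s : Finset σ) (i : σ) :
    s.indicatorExponent i = if i ∈ s then 1 else 0 := by
  simp [indicatorExponent, Finsupp.finsetSum_apply, Finsupp.single_apply]

theorem indicatorExponent_insert {s : Finset σ} {i : σ} (hi : i ∉ s) :
    (insert i s).indicatorExponent = Finsupp.single i 1 + s.indicatorExponent :=
  sum_insert hi

theorem prod_indicator_pow {R : Type*} [CommMonoidWithZero R] (t : Finset σ) (d : σ →₀ ℕ) :
    ∏ i ∈ d.support, (if i ∈ t then (1 : R) else 0) ^ d i = if d.support ⊆ t then 1 else 0 := by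
  split_ifs with hsub
  · exact prod_eq_one fun i hi => by rw [if_pos (hsub hi), one_pow]
  · obtain ⟨i, hi, hit⟩ := not_subset.1 hsub
    exact prod_eq_zero hi (by rw [if_neg hit, zero_pow (Finsupp.mem_support_iff.1 hi)])

variable [Fintype σ]

theorem indicatorExponent_add_compl (s : Finset σ) :
    s.indicatorExponent + sᶜ.indicatorExponent = (univ : Finset σ).indicatorExponent := by
  rw [indicatorExponent, indicatorExponent, indicatorExponent,
    ← sum_union disjoint_compl_right, union_compl]

theorem indicatorExponent_univ :
    (univ : Finset σ).indicatorExponent = Finsupp.equivFunOnFinite.symm fun _ => 1 := by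
  ext i
  simp [indicatorExponent_apply]

theorem support_indicatorExponent_univ : (univ : Finset σ).indicatorExponent.support = univ := by
  ext i
  simp [indicatorExponent_apply]

theorem sum_superset_neg_one_pow_card_compl {R : Type*} [CommRing R] (s : Finset σ) :
    ∑ t with s ⊆ t, (-1 : R) ^ #tᶜ = if s = univ then 1 else 0 := by
  have hcompl : ∑ t with s ⊆ t, (-1 : R) ^ #tᶜ = ∑ u ∈ sᶜ.powerset, (-1 : R) ^ #u := by
    refine sum_nbij' compl compl (fun t ht => ?_) (fun u hu => ?_) (fun t _ => compl_compl t)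
      (fun u _ => compl_compl u) (fun _ _ => rfl)
    · simpa using compl_subset_compl.2 (mem_filter.1 ht).2
    · simpa using compl_subset_compl.2 (mem_powerset.1 hu)
  rw [hcompl]
  simpa [compl_eq_empty_iff] using
    congrArg (Int.cast : ℤ → R) (sum_powerset_neg_one_pow_card (x := sᶜ))

end Finset

namespace Finsupp

variable {σ : Type*} [DecidableEq σ] [Fintype σ] {d : σ →₀ ℕ}

theorem eq_indicatorExponent_univ_of_le_one (hd : d.support = univ) (hle : ∀ i, d i ≤ 1) :
    d = (univ : Finset σ).indicatorExponent := by
  ext i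
  have := Finsupp.mem_support_iff.1 (hd ▸ mem_univ i)
  have := hle i
  simp only [indicatorExponent_apply, mem_univ, if_true]
  omega

theorem eq_indicatorExponent_univ_of_degree_eq_card (hd : d.support = univ)
    (hdeg : d.degree = Fintype.card σ) : d = (univ : Finset σ).indicatorExponent := by
  refine eq_indicatorExponent_univ_of_le_one hd fun i => ?_
  have hpos : ∀ j, 1 ≤ d j := fun j =>
    Nat.one_le_iff_ne_zero.2 (Finsupp.mem_support_iff.1 (hd ▸ mem_univ j))
  by_contra! hi
  have : ∑ j : σ, 1 < ∑ j, d j := sum_lt_sum (fun j _ => hpos j) ⟨i, mem_univ i, hi⟩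
  simp [← degree_eq_sum, hdeg] at this

end Finsupp

namespace MvPolynomial

variable {σ R : Type*} [CommRing R]

theorem coeff_foldr_pderiv [DecidableEq σ] {l : List σ} (hl : l.Nodup) (p : MvPolynomial σ R)
    (m : σ →₀ ℕ) :
    coeff m (l.foldr (fun i q => pderiv i q) p) =
      coeff (m + l.toFinset.indicatorExponent) p * ∏ i ∈ l.toFinset, ((m i : R) + 1) := by
  induction l generalizing m with
  | nil => simp [indicatorExponent]
  | cons i l ih =>
    obtain ⟨hi, hl⟩ := List.nodup_cons.1 hl
    have hi' : i ∉ l.toFinset := by simpa using hi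
    have hshift : ∀ j ∈ l.toFinset,
        (((m + Finsupp.single i 1 : σ →₀ ℕ) j : ℕ) : R) + 1 = (m j : R) + 1 := fun j hj => by
      simp [show i ≠ j by rintro rfl; exact hi' hj]
    rw [List.foldr_cons, coeff_pderiv, ih hl, List.toFinset_cons, prod_insert hi',
      prod_congr rfl hshift, indicatorExponent_insert hi', ← add_assoc]
    ring

theorem coeff_eq_zero_of_degreeOf_le_one {p : MvPolynomial σ R} (hp : ∀ i, p.degreeOf i ≤ 1)
    {d : σ →₀ ℕ} {i : σ} (hi : 2 ≤ d i) : coeff d p = 0 := by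
  by_contra h
  have := degreeOf_le_iff.1 (hp i) d (mem_support_iff.2 h)
  omega

variable [Fintype σ]

theorem foldr_pderiv_sum_X_pow (l : List σ) (k : ℕ) :
    l.foldr (fun i q => pderiv i q) ((∑ i, X i : MvPolynomial σ R) ^ k) =
      C (k.descFactorial l.length : R) * (∑ i, X i) ^ (k - l.length) := by
  classical
  induction l with
  | nil => simp
  | cons i l ih =>
    have hX : pderiv i (∑ j, X j : MvPolynomial σ R) = 1 := by
      simp [pderiv_X, Pi.single_apply]
    rw [List.foldr_cons, ih, pderiv_C_mul, pderiv_pow, hX, List.length_cons,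
      Nat.descFactorial_succ, Nat.sub_sub]
    simp only [map_mul, map_natCast, Nat.cast_mul, mul_one]
    ring

theorem isHomogeneous_sum_X_pow (k : ℕ) :
    ((∑ i, X i : MvPolynomial σ R) ^ k).IsHomogeneous k := by
  simpa using (IsHomogeneous.sum univ _ 1 fun i _ => isHomogeneous_X R i).pow k

variable [DecidableEq σ]

theorem coeff_indicatorExponent_univ_sum_X_pow :
    coeff (univ : Finset σ).indicatorExponent ((∑ i, X i : MvPolynomial σ R) ^ Fintype.card σ) =
      (Fintype.card σ).factorial := by
  have h := coeff_foldr_pderiv (nodup_toList univ)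
    ((∑ i, X i : MvPolynomial σ R) ^ Fintype.card σ) 0
  rw [foldr_pderiv_sum_X_pow, length_toList, card_univ, Nat.sub_self, pow_zero, mul_one,
    Nat.descFactorial_self, coeff_zero_C, toList_toFinset, zero_add] at h
  simpa using h.symm

theorem sum_neg_one_pow_card_compl_mul_eval_indicator (p : MvPolynomial σ R) :
    ∑ t : Finset σ, (-1 : R) ^ #tᶜ * eval (fun i => if i ∈ t then 1 else 0) p =
      ∑ d ∈ p.support with d.support = univ, coeff d p := by
  simp only [eval_eq, prod_indicator_pow, mul_sum]
  rw [sum_comm, sum_filter]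
  refine sum_congr rfl fun d _ => ?_
  simp only [mul_ite, mul_one, mul_zero, mul_comm _ (coeff d p), ← sum_filter,
    ← mul_sum, sum_superset_neg_one_pow_card_compl]

theorem sum_coeff_of_support_eq_univ {p : MvPolynomial σ R}
    (hp : ∀ d ∈ p.support, d.support = univ → d = (univ : Finset σ).indicatorExponent) :
    ∑ d ∈ p.support with d.support = univ, coeff d p =
      coeff (univ : Finset σ).indicatorExponent p := by
  refine sum_eq_single _
    (fun d hd hne => absurd (hp d (mem_filter.1 hd).1 (mem_filter.1 hd).2) hne) fun hnot => ?_
  by_contra h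
  exact hnot (mem_filter.2 ⟨mem_support_iff.2 h, support_indicatorExponent_univ⟩)

theorem coeff_indicatorExponent_univ_eq_of_eval_eq {p q : MvPolynomial σ R}
    (hp : ∀ d ∈ p.support, d.support = univ → d = (univ : Finset σ).indicatorExponent)
    (hq : ∀ d ∈ q.support, d.support = univ → d = (univ : Finset σ).indicatorExponent)
    (h : ∀ t : Finset σ, eval (fun i => if i ∈ t then 1 else 0) p =
      eval (fun i => if i ∈ t then 1 else 0) q) :
    coeff (univ : Finset σ).indicatorExponent p = coeff (univ : Finset σ).indicatorExponent q := by
  rw [← sum_coeff_of_support_eq_univ hp, ← sum_coeff_of_support_eq_univ hq,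
    ← sum_neg_one_pow_card_compl_mul_eval_indicator,
    ← sum_neg_one_pow_card_compl_mul_eval_indicator]
  simp only [h]

theorem eq_indicatorExponent_univ_of_degreeOf_le_one {p : MvPolynomial σ R}
    (hp : ∀ i, p.degreeOf i ≤ 1) :
    ∀ d ∈ p.support, d.support = univ → d = (univ : Finset σ).indicatorExponent :=
  fun d hd hsupp => Finsupp.eq_indicatorExponent_univ_of_le_one hsupp fun i =>
    degreeOf_le_iff.1 (hp i) d hd

theorem IsHomogeneous.eq_indicatorExponent_univ {p : MvPolynomial σ R}
    (hp : p.IsHomogeneous (Fintype.card σ)) :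
    ∀ d ∈ p.support, d.support = univ → d = (univ : Finset σ).indicatorExponent :=
  fun d hd hsupp => Finsupp.eq_indicatorExponent_univ_of_degree_eq_card hsupp <| by
    rw [Finsupp.degree_eq_weight_one]
    exact hp (mem_support_iff.1 hd)

theorem coeff_indicatorExponent_foldr_pderiv_compl (p : MvPolynomial σ R) (s t : Finset σ) :
    coeff s.indicatorExponent (tᶜ.toList.foldr (fun i q => pderiv i q) p) =
      coeff (s.indicatorExponent + tᶜ.indicatorExponent) p *
        ∏ i ∈ tᶜ, ((s.indicatorExponent i : R) + 1) := by
  rw [coeff_foldr_pderiv (nodup_toList _), toList_toFinset]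

theorem coeff_indicatorExponent_foldr_pderiv_compl_self (p : MvPolynomial σ R) (s : Finset σ) :
    coeff s.indicatorExponent (sᶜ.toList.foldr (fun i q => pderiv i q) p) =
      coeff (univ : Finset σ).indicatorExponent p := by
  rw [coeff_indicatorExponent_foldr_pderiv_compl, indicatorExponent_add_compl,
    prod_eq_one fun i hi => by simp [indicatorExponent_apply, mem_compl.1 hi], mul_one]

theorem coeff_indicatorExponent_foldr_pderiv_compl_of_not_subset {p : MvPolynomial σ R}
    (hp : ∀ i, p.degreeOf i ≤ 1) {s t : Finset σ} (hst : ¬s ⊆ t) :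
    coeff s.indicatorExponent (tᶜ.toList.foldr (fun i q => pderiv i q) p) = 0 := by
  obtain ⟨i, his, hit⟩ := not_subset.1 hst
  rw [coeff_indicatorExponent_foldr_pderiv_compl,
    coeff_eq_zero_of_degreeOf_le_one hp (i := i) (by simp [indicatorExponent_apply, his, hit]),
    zero_mul]

theorem linearIndependent_foldr_pderiv_compl [NoZeroDivisors R] {p : MvPolynomial σ R}
    (hp : ∀ i, p.degreeOf i ≤ 1) (htop : coeff (univ : Finset σ).indicatorExponent p ≠ 0) :
    LinearIndependent R fun t : Finset σ => tᶜ.toList.foldr (fun i q => pderiv i q) p := by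
  classical
  rw [Fintype.linearIndependent_iff]
  intro g hg
  by_contra! hne
  obtain ⟨s, hs, hmax⟩ := exists_max_image {t | g t ≠ 0} card
    (by simpa [Finset.Nonempty] using hne)
  have hcoeff := congrArg (coeff s.indicatorExponent) hg
  rw [coeff_sum, coeff_zero, sum_eq_single s] at hcoeff
  · rw [coeff_smul, coeff_indicatorExponent_foldr_pderiv_compl_self, smul_eq_mul] at hcoeff
    exact mul_ne_zero (mem_filter.1 hs).2 htop hcoeff
  · intro t _ hts
    rw [coeff_smul, smul_eq_mul]
    by_cases hgt : g t = 0
    · rw [hgt, zero_mul]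
    by_cases hst : s ⊆ t
    · have := hmax t (mem_filter.2 ⟨mem_univ t, hgt⟩)
      exact absurd (eq_of_subset_of_card_le hst this).symm hts
    · rw [coeff_indicatorExponent_foldr_pderiv_compl_of_not_subset hp hst, mul_zero]
  · exact fun h => absurd (mem_univ s) h

end MvPolynomial

theorem stmt3 {F : Type*} [Field F] [CharZero F] (n : ℕ) (Q : MvPolynomial (Fin n) F)
    (hml : ∀ i, Q.degreeOf i ≤ 1)
    (hagree : ∀ a : Fin n → F, (∀ i, a i = 0 ∨ a i = 1) →
      eval a Q = eval a ((∑ i, X i) ^ n)) :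
    Q.coeff (Finsupp.equivFunOnFinite.symm fun _ => 1) = (n.factorial : F) ∧
    (2 ^ n : Cardinal) ≤ Module.rank F ↥(Submodule.span F
      { R : MvPolynomial (Fin n) F |
        ∃ l : List (Fin n), R = l.foldr (fun i q => pderiv i q) Q }) := by
  have hpow := isHomogeneous_sum_X_pow (σ := Fin n) (R := F) (Fintype.card (Fin n))
  have htop : coeff (univ : Finset (Fin n)).indicatorExponent Q = n.factorial := by
    have := coeff_indicatorExponent_univ_eq_of_eval_eq
      (eq_indicatorExponent_univ_of_degreeOf_le_one hml) hpow.eq_indicatorExponent_univ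
      fun t => by rw [Fintype.card_fin]; exact hagree _ fun i => by split_ifs <;> simp
    simpa using this.trans coeff_indicatorExponent_univ_sum_X_pow
  refine ⟨by rwa [← indicatorExponent_univ], ?_⟩
  have hli := linearIndependent_foldr_pderiv_compl hml (by simp [htop, n.factorial_ne_zero])
  calc (2 ^ n : Cardinal) = Module.rank F (Submodule.span F (Set.range _)) := by
        rw [rank_span hli, ← Cardinal.lift_uzero (Cardinal.mk (Set.range _)),
          Cardinal.mk_range_eq_of_injective hli.injective, Cardinal.mk_fintype,
          Cardinal.lift_natCast]
        simp
    _ ≤ _ := Submodule.rank_mono <| Submodule.span_mono <| by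
        rintro _ ⟨t, rfl⟩
        exact ⟨_, rfl⟩
end

section
/- Let P(y,z) be a polynomial over a field F of characteristic 0 with individual degree at most r in each variable. Then for every Boolean point a in {0,1}^{n_y} with at most k nonzero coordinates, the partial evaluation P(a, z) lies in the F[z]-span of the set of polynomials obtained by taking partial derivatives of P of total order at most rk with respect to y-variables and then setting all y-variables to 0. -/
/-!
Expand `P(a, z) = ∑_d coeff_d(P)(z) a^d`. At a Boolean point `a^d` is `1` when `a = 1` on the
support of `d` and `0` otherwise, so only exponents `d` supported in the (at most `k`) nonzero
coordinates of `a` survive, and for those `|d| ≤ r k`. Each such coefficient is, up to the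
invertible factor `d! = ∏ d_i!`, the derivative `∂^d P` evaluated at `y = 0`.
-/

open MvPolynomial Finset Nat

namespace Finsupp

variable {σ : Type*}

noncomputable def multiFactorial (m : σ →₀ ℕ) : ℕ := m.prod fun _ n => n !

theorem multiFactorial_ne_zero (m : σ →₀ ℕ) : m.multiFactorial ≠ 0 :=
  prod_ne_zero_iff.mpr fun _ _ => factorial_ne_zero _

theorem multiFactorial_add_single (m : σ →₀ ℕ) (i : σ) :
    (m + single i 1).multiFactorial = (m i + 1) * m.multiFactorial := by
  have herase : (m + single i 1).erase i = m.erase i := by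
    rw [erase_add, erase_single, add_zero]
  rw [multiFactorial, multiFactorial, ← mul_prod_erase' _ i _ fun _ => factorial_zero,
    ← mul_prod_erase' m i _ fun _ => factorial_zero, herase, add_apply, single_eq_same,
    factorial_succ, mul_assoc]

theorem degree_le_mul_card_support {r : ℕ} {d : σ →₀ ℕ} (hd : ∀ i, d i ≤ r) :
    d.degree ≤ r * #d.support := by
  rw [degree_apply, mul_comm, ← smul_eq_mul]
  exact sum_le_card_nsmul _ _ _ fun i _ => hd i

end Finsupp

namespace MvPolynomial

variable {σ R : Type*}

theorem coeff_foldr_pderiv_mul_multiFactorial [CommSemiring R] [DecidableEq σ] (l : List σ)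
    (p : MvPolynomial σ R) (m : σ →₀ ℕ) :
    coeff m (l.foldr (fun i q => pderiv i q) p) * m.multiFactorial =
      (m + Multiset.toFinsupp l).multiFactorial * coeff (m + Multiset.toFinsupp l) p := by
  induction l generalizing m with
  | nil => simp [mul_comm]
  | cons i l ih =>
    have hcount : Multiset.toFinsupp ((i :: l : List σ) : Multiset σ) =
        Finsupp.single i 1 + Multiset.toFinsupp l := by
      rw [← Multiset.cons_coe, ← Multiset.singleton_add, Multiset.toFinsupp_add,
        Multiset.toFinsupp_singleton]
    calc coeff m ((i :: l).foldr (fun i q => pderiv i q) p) * m.multiFactorial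
        = coeff (m + Finsupp.single i 1) (l.foldr (fun i q => pderiv i q) p) *
            (m + Finsupp.single i 1).multiFactorial := by
          rw [List.foldr_cons, coeff_pderiv, Finsupp.multiFactorial_add_single]
          push_cast
          ring
      _ = _ := by rw [ih, hcount, add_assoc]

theorem eval_zero_foldr_pderiv_toList [CommSemiring R] (d : σ →₀ ℕ) (p : MvPolynomial σ R) :
    eval 0 (d.toMultiset.toList.foldr (fun i q => pderiv i q) p) =
      d.multiFactorial * coeff d p := by
  classical
  have h := coeff_foldr_pderiv_mul_multiFactorial d.toMultiset.toList p 0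
  rw [Multiset.coe_toList, Finsupp.toMultiset_toFinsupp, zero_add] at h
  simpa [Finsupp.multiFactorial, eval_zero, constantCoeff_eq] using h

theorem coeff_mem_span_eval_zero_foldr_pderiv [CommRing R] [Algebra ℚ R]
    (p : MvPolynomial σ R) {d : σ →₀ ℕ} {N : ℕ} (hd : d.degree ≤ N) :
    coeff d p ∈ Submodule.span R
      {Q | ∃ l : List σ, l.length ≤ N ∧ Q = eval 0 (l.foldr (fun i q => pderiv i q) p)} := by
  set n := d.multiFactorial
  have hn : (n : ℚ) ≠ 0 := Nat.cast_ne_zero.mpr d.multiFactorial_ne_zero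
  have hcoeff :
      coeff d p = (n : ℚ)⁻¹ • eval 0 (d.toMultiset.toList.foldr (fun i q => pderiv i q) p) := by
    rw [eval_zero_foldr_pderiv_toList, ← nsmul_eq_mul, ← Nat.cast_smul_eq_nsmul ℚ, smul_smul,
      inv_mul_cancel₀ hn, one_smul]
  rw [hcoeff]
  refine Submodule.smul_of_tower_mem _ _ (Submodule.subset_span ⟨_, ?_, rfl⟩)
  rw [Multiset.length_toList, Finsupp.card_toMultiset]
  exact hd

end MvPolynomial

theorem stmt7 {F : Type*} [Field F] [CharZero F] (ny nz r k : ℕ)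
    (P : MvPolynomial (Fin ny) (MvPolynomial (Fin nz) F))
    (hdeg : ∀ i, P.degreeOf i ≤ r)
    (a : Fin ny → MvPolynomial (Fin nz) F)
    (ha01 : ∀ i, a i = 0 ∨ a i = 1)
    (hak : ∃ S : Finset (Fin ny), S.card ≤ k ∧ ∀ i ∉ S, a i = 0) :
    eval a P ∈ Submodule.span (MvPolynomial (Fin nz) F)
      { Q | ∃ l : List (Fin ny), l.length ≤ r * k ∧
        Q = eval (0 : Fin ny → MvPolynomial (Fin nz) F)
          (l.foldr (fun i q => pderiv i q) P) } := by
  obtain ⟨S, hSk, hS⟩ := hak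
  rw [eval_eq]
  refine Submodule.sum_mem _ fun d hd => ?_
  by_cases hvanish : ∃ i ∈ d.support, a i = 0
  · obtain ⟨i, hi, hai⟩ := hvanish
    rw [prod_eq_zero hi (by rw [hai, zero_pow (Finsupp.mem_support_iff.mp hi)]), mul_zero]
    exact zero_mem _
  push Not at hvanish
  have hsupp : d.support ⊆ S := fun i hi => by_contra fun hiS => hvanish i hi (hS i hiS)
  rw [prod_eq_one fun i hi => by rw [(ha01 i).resolve_left (hvanish i hi), one_pow], mul_one]
  refine coeff_mem_span_eval_zero_foldr_pderiv P ?_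
  calc d.degree ≤ r * #d.support :=
        Finsupp.degree_le_mul_card_support fun i => degreeOf_le_iff.mp (hdeg i) d hd
    _ ≤ r * k := Nat.mul_le_mul_left r ((card_le_card hsupp).trans hSk)
end

section
/- Let C = Σ_{t=1}^{s} ∏_{i=1}^{d_t} L_{t,i} be a depth-3 (ΣΠΣ) circuit over a field F with s product gates, each of formal degree at most d (each L_{t,i} a linear form), in variables y ⊔ z. Then the dimension of the F-span of the set of z-polynomials { C(a, z) : a in {0,1}^{n_y} } is at most s·2^d. -/
open MvPolynomial Cardinal

private lemma finsupp_deg_le_one {σ : Type*} (m : σ →₀ ℕ)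
    (h : (m.sum fun _ e => e) ≤ 1) : m = 0 ∨ ∃ v, m = Finsupp.single v 1 := by
  classical
  rcases Finset.eq_empty_or_nonempty m.support with hs | ⟨v, hv⟩
  · left
    ext x
    by_contra hx
    exact (Finset.notMem_empty x) (hs ▸ Finsupp.mem_support_iff.mpr hx)
  · right
    refine ⟨v, ?_⟩
    have hmv : 1 ≤ m v := Nat.one_le_iff_ne_zero.mpr (Finsupp.mem_support_iff.mp hv)
    have hsum : (m.sum fun _ e => e) = ∑ x ∈ m.support, m x := rfl
    have hle : ∑ x ∈ m.support, m x ≤ 1 := hsum ▸ h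
    have hsingle : m.support = {v} := by
      apply Finset.eq_singleton_iff_unique_mem.mpr
      refine ⟨hv, fun w hw => ?_⟩
      by_contra hwv
      have hss : ({w, v} : Finset σ) ⊆ m.support := by
        intro x hx
        rcases Finset.mem_insert.mp hx with rfl | hx
        · exact hw
        · exact Finset.mem_singleton.mp hx ▸ hv
      have h2 : ∑ x ∈ ({w, v} : Finset σ), m x ≤ ∑ x ∈ m.support, m x :=
        Finset.sum_le_sum_of_subset hss
      have : 2 ≤ ∑ x ∈ m.support, m x := by
        refine le_trans ?_ h2
        rw [Finset.sum_insert (by simpa using hwv), Finset.sum_singleton]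
        have hmw : 1 ≤ m w := Nat.one_le_iff_ne_zero.mpr (Finsupp.mem_support_iff.mp hw)
        omega
      omega
    have hmv1 : m v = 1 := by
      have : m v ≤ 1 := by
        calc m v = ∑ x ∈ m.support, m x := by rw [hsingle, Finset.sum_singleton]
        _ ≤ 1 := hle
      omega
    ext x
    by_cases hx : x = v
    · subst hx; simp [hmv1]
    · have : x ∉ m.support := by rw [hsingle]; simpa using hx
      simp [Finsupp.notMem_support_iff.mp this, Finsupp.single_apply, Ne.symm hx, hx]

private lemma good_decomp {F : Type*} [Field F] {ny nz : ℕ}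
    (P : MvPolynomial (Fin ny ⊕ Fin nz) F) (hP : P.totalDegree ≤ 1) :
    ∃ (g : (Fin ny → F) → F) (M : MvPolynomial (Fin nz) F),
      ∀ a : Fin ny → F,
        aeval (Sum.elim (fun i => C (a i)) X) P = C (g a) + M := by
  classical
  set Good : MvPolynomial (Fin ny ⊕ Fin nz) F → Prop := fun Q =>
    ∃ (g : (Fin ny → F) → F) (M : MvPolynomial (Fin nz) F),
      ∀ a : Fin ny → F,
        aeval (Sum.elim (fun i => C (a i)) X) Q = C (g a) + M with hGood
  have h0 : Good 0 := ⟨0, 0, fun a => by simp⟩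
  have hadd : ∀ Q R, Good Q → Good R → Good (Q + R) := by
    rintro Q R ⟨g1, M1, h1⟩ ⟨g2, M2, h2⟩
    exact ⟨g1 + g2, M1 + M2, fun a => by
      simp only [map_add, h1 a, h2 a, Pi.add_apply, C_add]; ring⟩
  have key : Good P := by
    rw [P.as_sum]
    refine Finset.sum_induction _ Good hadd h0 ?_
    intro m hm
    have hdeg : (m.sum fun _ e => e) ≤ 1 := le_trans (le_totalDegree hm) hP
    rcases finsupp_deg_le_one m hdeg with rfl | ⟨v, rfl⟩
    · refine ⟨fun _ => coeff 0 P, 0, fun a => by simp [monomial_zero']⟩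
    · have hmono : (monomial (Finsupp.single v 1) (coeff (Finsupp.single v 1) P))
          = C (coeff (Finsupp.single v 1) P) * X v := by
        rw [C_mul_X_eq_monomial]
      cases v with
      | inl i =>
          refine ⟨fun a => coeff (Finsupp.single (Sum.inl i) 1) P * a i, 0, fun a => ?_⟩
          rw [hmono, map_mul, aeval_C, aeval_X, Sum.elim_inl,
            algebraMap_eq, ← C_mul, add_zero]
      | inr j =>
          refine ⟨0, C (coeff (Finsupp.single (Sum.inr j) 1) P) * X j, fun a => ?_⟩
          rw [hmono, map_mul, aeval_C, aeval_X, Sum.elim_inr]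
          simp [algebraMap_eq]
  exact key

theorem stmt14 {F : Type*} [Field F] (ny nz s d : ℕ)
    (dt : Fin s → ℕ) (hdt : ∀ t, dt t ≤ d)
    (L : (t : Fin s) → Fin (dt t) → MvPolynomial (Fin ny ⊕ Fin nz) F)
    (hL : ∀ t i, (L t i).totalDegree ≤ 1) :
    Module.rank F ↥(Submodule.span F
      { Q : MvPolynomial (Fin nz) F | ∃ a : Fin ny → F,
        (∀ i, a i = 0 ∨ a i = 1) ∧
        Q = aeval (Sum.elim (fun i => C (a i)) X) (∑ t, ∏ i, L t i) })
      ≤ (s * 2 ^ d : ℕ) := by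
  classical
  choose g M hgM using fun t i => good_decomp (L t i) (hL t i)
  set f : ((t : Fin s) × Finset (Fin (dt t))) → MvPolynomial (Fin nz) F :=
    fun p => ∏ i ∈ p.2, M p.1 i with hf
  have hsub : { Q : MvPolynomial (Fin nz) F | ∃ a : Fin ny → F,
        (∀ i, a i = 0 ∨ a i = 1) ∧
        Q = aeval (Sum.elim (fun i => C (a i)) X) (∑ t, ∏ i, L t i) }
      ⊆ (Submodule.span F (Set.range f) : Set (MvPolynomial (Fin nz) F)) := by
    rintro Q ⟨a, -, rfl⟩
    rw [map_sum]
    refine Submodule.sum_mem _ fun t _ => ?_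
    rw [map_prod]
    rw [Finset.prod_congr rfl (fun i _ => hgM t i a)]
    rw [Finset.prod_add]
    refine Submodule.sum_mem _ fun T _ => ?_
    have heq : ((∏ i ∈ T, C (g t i a)) * ∏ i ∈ Finset.univ \ T, M t i)
        = (∏ i ∈ T, g t i a) • f ⟨t, Finset.univ \ T⟩ := by
      rw [smul_eq_C_mul, map_prod]
    rw [heq]
    exact Submodule.smul_mem _ _ (Submodule.subset_span ⟨⟨t, Finset.univ \ T⟩, rfl⟩)
  calc Module.rank F ↥(Submodule.span F
      { Q : MvPolynomial (Fin nz) F | ∃ a : Fin ny → F,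
        (∀ i, a i = 0 ∨ a i = 1) ∧
        Q = aeval (Sum.elim (fun i => C (a i)) X) (∑ t, ∏ i, L t i) })
      ≤ Module.rank F ↥(Submodule.span F (Set.range f)) :=
        Submodule.rank_mono (Submodule.span_le.mpr hsub)
    _ ≤ #(Set.range f) := rank_span_le _
    _ = (Fintype.card (Set.range f) : Cardinal) := Cardinal.mk_fintype _
    _ ≤ ((s * 2 ^ d : ℕ) : Cardinal) := by
        rw [Nat.cast_le]
        refine le_trans (Fintype.card_range_le f) ?_
        rw [Fintype.card_sigma]
        calc ∑ t : Fin s, Fintype.card (Finset (Fin (dt t)))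
            = ∑ t : Fin s, 2 ^ (dt t) := by
              simp [Fintype.card_finset, Fintype.card_fin]
          _ ≤ ∑ _t : Fin s, 2 ^ d := Finset.sum_le_sum fun t _ =>
              Nat.pow_le_pow_right (by norm_num) (hdt t)
          _ = s * 2 ^ d := by simp [Finset.sum_const, Fintype.card_fin, mul_comm]
end
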